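/- (Strict affirmative action.) Let V : [0,1] → ℝ be a continuous Bellman fixed point that is strictly decreasing on [0,1]. Let φ0 satisfy φ0* < φ0 < 1 and let θ0 ∈ Θ(φ0) attain the supremum at φ0 (i.e., V(φ0) = R(φ0,θ0) + γ·V(S(φ0,θ0))). If θ0 lies in the interior of the interval Θ(φ0) and V is differentiable at S(φ0,θ0) with strictly negative derivative there, then θ0 < θ1(φ0,θ0). -/

import Mathlib

/-- Advantaged-group threshold θ1(φ0,θ0) (for φ0 < 1). -/
noncomputable def θ1 (σ τ α φ0 θ0 : ℝ) : ℝ :=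
  (σ * (1 - α) + (1 - φ0) * τ - φ0 * θ0) / (1 - φ0)

/-- Admissible threshold set Θ(φ0). -/
def Θ (σ α φ0 : ℝ) : Set ℝ :=
  {θ0 | θ0 ∈ Set.Icc (0 : ℝ) σ ∧ φ0 * (1 - θ0 / σ) ≤ α ∧
    φ0 * (1 - θ0 / σ) + (1 - φ0) ≥ α}

/-- State transition S(φ0,θ0). -/
noncomputable def S (σ φ0 θ0 : ℝ) : ℝ := φ0 - (φ0 / (2 * σ)) * (σ ^ 2 - θ0 ^ 2)

/-- Reward function R(φ0,θ0), with the boundary convention at φ0 = 1. -/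
noncomputable def R (σ τ α φ0 θ0 : ℝ) : ℝ :=
  if φ0 < 1 then
    (φ0 / (2 * σ)) * (σ ^ 2 - θ0 ^ 2)
      + ((1 - φ0) / (2 * σ)) * ((σ + τ) ^ 2 - (θ1 σ τ α φ0 θ0) ^ 2)
  else (1 / (2 * σ)) * (σ ^ 2 - θ0 ^ 2)

/-- Bellman operator (T f)(φ0) = sup over admissible θ0 of R + γ f(S). -/
noncomputable def T (σ τ α γ : ℝ) (f : ℝ → ℝ) (φ0 : ℝ) : ℝ :=
  sSup ((fun θ0 => R σ τ α φ0 θ0 + γ * f (S σ φ0 θ0)) '' Θ σ α φ0)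

/-- The tipping point φ0*. -/
noncomputable def φstar (σ τ α γ : ℝ) : ℝ :=
  max 0 (min (1 - α)
    (1 - (α * σ / (2 * τ)) * (1 + Real.sqrt (1 + 2 * τ * γ / (1 - γ)))))

/-!
Since `V` is continuous, the objective `θ ↦ R(φ0,θ) + γ V(S(φ0,θ))` is bounded on `Θ(φ0)`, so
the Bellman equation at `φ0` makes `θ0` a maximiser over `Θ(φ0)`; being interior, it is a
critical point. As `∂R/∂θ = (φ0/σ)(θ1 − θ)` and `∂S/∂θ = φ0 θ / σ`, the first-order condition
reads `θ1 − θ0 = −γ V'(S) θ0`, which is positive.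
-/

open Set

theorem IsMaxOn.of_sSup_image_eq {α : Type*} {f : α → ℝ} {s : Set α} {a : α}
    (hf : BddAbove (f '' s)) (ha : sSup (f '' s) = f a) : IsMaxOn f s a :=
  fun _ hx => ha ▸ le_csSup hf (mem_image_of_mem f hx)

noncomputable def bellmanObjective (σ τ α γ : ℝ) (V : ℝ → ℝ) (φ0 θ : ℝ) : ℝ :=
  R σ τ α φ0 θ + γ * V (S σ φ0 θ)

theorem hasDerivAt_S (σ φ0 θ : ℝ) : HasDerivAt (S σ φ0) (φ0 * θ / σ) θ := by
  refine ((((hasDerivAt_pow 2 θ).const_sub (σ ^ 2)).const_mul (φ0 / (2 * σ))).const_sub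
    φ0).congr_deriv ?_
  push_cast
  ring

theorem hasDerivAt_θ1 (σ τ α φ0 θ : ℝ) : HasDerivAt (θ1 σ τ α φ0) (-φ0 / (1 - φ0)) θ := by
  have h := ((hasDerivAt_id θ).const_mul φ0).const_sub (σ * (1 - α) + (1 - φ0) * τ)
  unfold θ1
  simpa using h.div_const (1 - φ0)

section

variable {σ τ α γ φ0 θ : ℝ}

theorem T_eq_sSup_bellmanObjective (V : ℝ → ℝ) :
    T σ τ α γ V φ0 = sSup (bellmanObjective σ τ α γ V φ0 '' Θ σ α φ0) :=
  rfl

theorem S_mem_Icc (hσ : 0 < σ) (hσ2 : σ ≤ 2) (hφ0 : φ0 ∈ Icc 0 1) (hθ : θ ∈ Icc 0 σ) :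
    S σ φ0 θ ∈ Icc 0 1 := by
  obtain ⟨hφ0, hφ1⟩ := hφ0
  obtain ⟨hθ0, hθσ⟩ := hθ
  have hloss : (σ ^ 2 - θ ^ 2) / (2 * σ) ∈ Icc 0 (σ / 2) := by
    constructor
    · exact div_nonneg (by nlinarith) (by positivity)
    · rw [div_le_iff₀ (by positivity)]; nlinarith
  have hS : S σ φ0 θ = φ0 * (1 - (σ ^ 2 - θ ^ 2) / (2 * σ)) := by unfold S; ring
  rw [hS]
  constructor <;> nlinarith [hloss.1, hloss.2]

theorem continuous_R : Continuous (R σ τ α φ0) := by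
  unfold R θ1; split_ifs <;> fun_prop

theorem R_of_lt_one (hφ0 : φ0 < 1) (θ : ℝ) :
    R σ τ α φ0 θ = (φ0 / (2 * σ)) * (σ ^ 2 - θ ^ 2)
      + ((1 - φ0) / (2 * σ)) * ((σ + τ) ^ 2 - (θ1 σ τ α φ0 θ) ^ 2) :=
  if_pos hφ0

theorem hasDerivAt_R (hφ0 : φ0 < 1) (θ : ℝ) :
    HasDerivAt (R σ τ α φ0) (φ0 / σ * (θ1 σ τ α φ0 θ - θ)) θ := by
  rw [funext (R_of_lt_one hφ0)]
  have hdis := ((hasDerivAt_pow 2 θ).const_sub (σ ^ 2)).const_mul (φ0 / (2 * σ))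
  have hadv := (((hasDerivAt_θ1 σ τ α φ0 θ).pow 2).const_sub ((σ + τ) ^ 2)).const_mul
    ((1 - φ0) / (2 * σ))
  refine (hdis.add hadv).congr_deriv ?_
  have : 1 - φ0 ≠ 0 := by linarith
  field_simp
  push_cast
  ring

theorem hasDerivAt_bellmanObjective {V : ℝ → ℝ} {v : ℝ} (hφ0 : φ0 < 1)
    (hv : HasDerivAt V v (S σ φ0 θ)) :
    HasDerivAt (bellmanObjective σ τ α γ V φ0)
      (φ0 / σ * (θ1 σ τ α φ0 θ - θ + γ * v * θ)) θ := by
  refine ((hasDerivAt_R hφ0 θ).add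
    ((hv.comp θ (hasDerivAt_S σ φ0 θ)).const_mul γ)).congr_deriv ?_
  ring

theorem bddAbove_bellmanObjective {V : ℝ → ℝ} (hσ : 0 < σ) (hσ2 : σ ≤ 2)
    (hφ0 : φ0 ∈ Icc 0 1) (hV : ContinuousOn V (Icc 0 1)) :
    BddAbove (bellmanObjective σ τ α γ V φ0 '' Θ σ α φ0) := by
  have hcont : ContinuousOn (bellmanObjective σ τ α γ V φ0) (Icc 0 σ) := by
    have hVS : ContinuousOn (fun θ => V (S σ φ0 θ)) (Icc 0 σ) :=
      hV.comp (by unfold S; fun_prop) fun θ hθ => S_mem_Icc hσ hσ2 hφ0 hθ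
    exact continuous_R.continuousOn.add (continuousOn_const.mul hVS)
  exact (isCompact_Icc.bddAbove_image hcont).mono (image_mono fun θ hθ => hθ.1)

end

theorem strict_affirmative_action_general (σ τ α γ : ℝ) (hσ : 0 < σ) (hτ : 0 < τ)
    (hστ : σ + τ ≤ 1) (hγ : 0 < γ)
    (V : ℝ → ℝ) (hVc : ContinuousOn V (Set.Icc (0 : ℝ) 1))
    (hVfix : ∀ φ0 ∈ Set.Icc (0 : ℝ) 1, V φ0 = T σ τ α γ V φ0)
    (φ0 : ℝ) (hφ0gt : φstar σ τ α γ < φ0) (hφ0lt : φ0 < 1)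
    (θ0 : ℝ)
    (hopt : V φ0 = R σ τ α φ0 θ0 + γ * V (S σ φ0 θ0))
    (hint : θ0 ∈ interior (Θ σ α φ0))
    (v : ℝ) (hv : HasDerivAt V v (S σ φ0 θ0)) (hvneg : v < 0) :
    θ0 < θ1 σ τ α φ0 θ0 := by
  have hφ0pos : 0 < φ0 := (le_max_left _ _).trans_lt hφ0gt
  have hφ0 : φ0 ∈ Icc 0 1 := ⟨hφ0pos.le, hφ0lt.le⟩
  have hθ0pos : 0 < θ0 := by
    have := interior_mono (fun θ hθ => hθ.1) hint
    rw [interior_Icc] at this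
    exact this.1
  have hmax : IsMaxOn (bellmanObjective σ τ α γ V φ0) (Θ σ α φ0) θ0 := by
    refine .of_sSup_image_eq (bddAbove_bellmanObjective hσ (by linarith) hφ0 hVc) ?_
    rw [← T_eq_sSup_bellmanObjective, ← hVfix φ0 hφ0, hopt]
    rfl
  have hfoc := (hmax.isLocalMax (mem_interior_iff_mem_nhds.mp hint)).hasDerivAt_eq_zero
    (hasDerivAt_bellmanObjective hφ0lt hv)
  have hcrit : θ1 σ τ α φ0 θ0 - θ0 + γ * v * θ0 = 0 :=
    (mul_eq_zero.mp hfoc).resolve_left (by positivity)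
  linarith [mul_pos (mul_pos hγ (neg_pos.mpr hvneg)) hθ0pos]

/-- Strict affirmative action: beyond the tipping point, an interior optimal
threshold is strictly below the threshold for group A, provided V is
differentiable at the next state with strictly negative derivative. -/
theorem strict_affirmative_action (σ τ α γ : ℝ) (hσ : 0 < σ) (hτ : 0 < τ)
    (hστ : σ + τ ≤ 1) (hα : 0 < α) (hα1 : α < 1) (hγ : 0 < γ) (hγ1 : γ < 1)
    (V : ℝ → ℝ) (hVc : ContinuousOn V (Set.Icc (0 : ℝ) 1))
    (hVfix : ∀ φ0 ∈ Set.Icc (0 : ℝ) 1, V φ0 = T σ τ α γ V φ0)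
    (hVdec : StrictAntiOn V (Set.Icc (0 : ℝ) 1))
    (φ0 : ℝ) (hφ0gt : φstar σ τ α γ < φ0) (hφ0lt : φ0 < 1)
    (θ0 : ℝ) (hθ0 : θ0 ∈ Θ σ α φ0)
    (hopt : V φ0 = R σ τ α φ0 θ0 + γ * V (S σ φ0 θ0))
    (hint : θ0 ∈ interior (Θ σ α φ0))
    (v : ℝ) (hv : HasDerivAt V v (S σ φ0 θ0)) (hvneg : v < 0) :
    θ0 < θ1 σ τ α φ0 θ0 :=
  strict_affirmative_action_general σ τ α γ hσ hτ hστ hγ V hVc hVfix φ0 hφ0gt hφ0lt θ0 hopt hint v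
    hv hvneg
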